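/- Let $A, B$ be unital differential graded algebras over rings of characteristic 2, and let $\mathcal{M}_k$ ($k \in \mathbb{Z}/3$) be type DD structures over $(A, B)$ with morphisms $f_k : \mathcal{M}_k \to \mathcal{M}_{k+1}$, $\phi_k : \mathcal{M}_k \to \mathcal{M}_{k+2}$, $\psi_k : \mathcal{M}_k \to \mathcal{M}_k$ satisfying $\partial f_k = 0$, $f_{k+1} \circ f_k + \partial \phi_k = 0$, and $f_{k+2} \circ \phi_k + \phi_{k+1} \circ f_k + \partial \psi_k = \mathrm{Id}_k$. Then the maps $G_k : \mathcal{M}_k \to \mathrm{Cone}(f_{k+1})$ defined by $G_k(m) = (f_k(m), \phi_k(m))$ and $G_k' : \mathrm{Cone}(f_{k+1}) \to \mathcal{M}_k$ defined by $G_k'(m_{k+1}, m_{k+2}) = \phi_{k+1}(m_{k+1}) + f_{k+2}(m_{k+2})$ are type DD homomorphisms, and $G_k' \circ G_k$ is homotopic to $\mathrm{Id}_k$ via the homotopy $\psi_k$. -/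

import Mathlib

/-!
The cone differential is lower triangular, so the boundaries of `G_k` and `G'_k` split into
components: `∂G_k = (∂f_k, f_{k+1} ∘ f_k + ∂φ_k)` and
`∂G'_k = (f_{k+2} ∘ f_{k+1} + ∂φ_{k+1}, ∂f_{k+2})`, all of which vanish by hypothesis, while
`G'_k ∘ G_k = f_{k+2} ∘ φ_k + φ_{k+1} ∘ f_k`. In characteristic `2` the relation defining `ψ_k`
then rearranges to `∂ψ_k = G'_k ∘ G_k + Id_k`.
-/

open TensorProduct

section DD

variable (k : Type*) [CommRing k]
variable (A B : Type*) [Ring A] [Ring B] [Algebra k A] [Algebra k B]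

/-- `Box X = A ⊗ X ⊗ B`, the target of structure maps and morphisms of
type DD structures over `(A, B)`. -/
abbrev Box (X : Type*) [AddCommGroup X] [Module k X] : Type _ :=
  A ⊗[k] (X ⊗[k] B)

variable {X Y Z : Type*} [AddCommGroup X] [Module k X] [AddCommGroup Y] [Module k Y]
  [AddCommGroup Z] [Module k Z]

/-- Left multiplication by `A` on the outer `A`-factor of `A ⊗ X ⊗ B`. -/
noncomputable def actA (X : Type*) [AddCommGroup X] [Module k X] :
    A →ₗ[k] Box k A B X →ₗ[k] Box k A B X :=
  (LinearMap.rTensorHom (X ⊗[k] B)).comp (LinearMap.mul k A)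

/-- Right multiplication by `B` on the outer `B`-factor of `A ⊗ X ⊗ B`. -/
noncomputable def actB (X : Type*) [AddCommGroup X] [Module k X] :
    B →ₗ[k] Box k A B X →ₗ[k] Box k A B X :=
  (LinearMap.lTensorHom A).comp ((LinearMap.lTensorHom X).comp ((LinearMap.mul k B).flip))

/-- The collapse map `A ⊗ (A ⊗ X ⊗ B) ⊗ B → A ⊗ X ⊗ B`,
`a ⊗ (a' ⊗ x ⊗ b') ⊗ b ↦ (a * a') ⊗ x ⊗ (b' * b)`, used to compose
type DD morphisms (multiplying the outer algebra factors). -/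
noncomputable def collapse (X : Type*) [AddCommGroup X] [Module k X] :
    A ⊗[k] ((Box k A B X) ⊗[k] B) →ₗ[k] Box k A B X :=
  TensorProduct.lift
    (((LinearMap.llcomp k ((Box k A B X) ⊗[k] B) (Box k A B X) (Box k A B X)).flip
        (TensorProduct.lift ((actB k A B X).flip))).comp (actA k A B X))

/-- The functorial map `A ⊗ X ⊗ B → A ⊗ Y ⊗ B` induced by `φ : X → Y`. -/
noncomputable def boxMap (φ : X →ₗ[k] Y) : Box k A B X →ₗ[k] Box k A B Y :=
  TensorProduct.map LinearMap.id (TensorProduct.map φ LinearMap.id)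

/-- Extension of a type DD morphism `g : Y → A ⊗ Z ⊗ B` to a map
`A ⊗ Y ⊗ B → A ⊗ Z ⊗ B`, multiplying the outer algebra factors. -/
noncomputable def ddExt (g : Y →ₗ[k] Box k A B Z) :
    Box k A B Y →ₗ[k] Box k A B Z :=
  (collapse k A B Z).comp
    (TensorProduct.map LinearMap.id (TensorProduct.map g LinearMap.id))

/-- Composition of type DD morphisms. -/
noncomputable def ddComp (g : Y →ₗ[k] Box k A B Z) (f : X →ₗ[k] Box k A B Y) :
    X →ₗ[k] Box k A B Z :=
  (ddExt k A B g).comp f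

/-- The differential `d_A ⊗ id ⊗ id + id ⊗ id ⊗ d_B` on `A ⊗ X ⊗ B`. -/
noncomputable def boxD (dA : A →ₗ[k] A) (dB : B →ₗ[k] B) (X : Type*)
    [AddCommGroup X] [Module k X] : Box k A B X →ₗ[k] Box k A B X :=
  TensorProduct.map dA LinearMap.id +
    TensorProduct.map LinearMap.id (TensorProduct.map LinearMap.id dB)

/-- The type DD structure compatibility condition for `δ¹ : X → A ⊗ X ⊗ B`:
`(d_A ⊗ id ⊗ id + id ⊗ id ⊗ d_B) ∘ δ¹ + (μ_A ⊗ id ⊗ μ_B) ∘ (id ⊗ δ¹ ⊗ id) ∘ δ¹ = 0`. -/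
def IsDDStructure (dA : A →ₗ[k] A) (dB : B →ₗ[k] B)
    (δ : X →ₗ[k] Box k A B X) : Prop :=
  (boxD k A B dA dB X).comp δ + (ddExt k A B δ).comp δ = 0

/-- The boundary `∂f` of a type DD morphism `f : X → A ⊗ Y ⊗ B`. -/
noncomputable def ddBdry (dA : A →ₗ[k] A) (dB : B →ₗ[k] B)
    (δX : X →ₗ[k] Box k A B X) (δY : Y →ₗ[k] Box k A B Y)
    (f : X →ₗ[k] Box k A B Y) : X →ₗ[k] Box k A B Y :=
  (ddExt k A B δY).comp f + (ddExt k A B f).comp δX + (boxD k A B dA dB Y).comp f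

/-- The identity type DD morphism `x ↦ 1 ⊗ x ⊗ 1`. -/
noncomputable def ddId (X : Type*) [AddCommGroup X] [Module k X] :
    X →ₗ[k] Box k A B X :=
  (TensorProduct.mk k A (X ⊗[k] B) 1).comp ((TensorProduct.mk k X B).flip 1)


/-- The structure map of the mapping cone of a type DD morphism
`f : M → A ⊗ N ⊗ B`: on `M ⊕ N`, `δ_f(m, n) = (δ_M m, f m + δ_N n)`. -/
noncomputable def coneδ {M N : Type*} [AddCommGroup M] [Module k M]
    [AddCommGroup N] [Module k N]
    (δM : M →ₗ[k] Box k A B M) (δN : N →ₗ[k] Box k A B N)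
    (f : M →ₗ[k] Box k A B N) : M × N →ₗ[k] Box k A B (M × N) :=
  (boxMap k A B (LinearMap.inl k M N)).comp (δM.comp (LinearMap.fst k M N)) +
    (boxMap k A B (LinearMap.inr k M N)).comp (f.comp (LinearMap.fst k M N)) +
    (boxMap k A B (LinearMap.inr k M N)).comp (δN.comp (LinearMap.snd k M N))

/-- The morphism `G_k : M_k → Cone(f_{k+1})`, `G_k(m) = (f_k(m), φ_k(m))`. -/
noncomputable def Gmor {X Y Z : Type*} [AddCommGroup X] [Module k X]
    [AddCommGroup Y] [Module k Y] [AddCommGroup Z] [Module k Z]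
    (f : X →ₗ[k] Box k A B Y) (φ : X →ₗ[k] Box k A B Z) :
    X →ₗ[k] Box k A B (Y × Z) :=
  (boxMap k A B (LinearMap.inl k Y Z)).comp f +
    (boxMap k A B (LinearMap.inr k Y Z)).comp φ

/-- The morphism `G'_k : Cone(f_{k+1}) → M_k`,
`G'_k(m_{k+1}, m_{k+2}) = φ_{k+1}(m_{k+1}) + f_{k+2}(m_{k+2})`. -/
noncomputable def G'mor {X Y Z : Type*} [AddCommGroup X] [Module k X]
    [AddCommGroup Y] [Module k Y] [AddCommGroup Z] [Module k Z]
    (φ' : Y →ₗ[k] Box k A B X) (f'' : Z →ₗ[k] Box k A B X) :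
    Y × Z →ₗ[k] Box k A B X :=
  φ'.comp (LinearMap.fst k Y Z) + f''.comp (LinearMap.snd k Y Z)

section Cone

variable {W : Type*} [AddCommGroup W] [Module k W]

theorem add_self_eq_zero_of_charTwo (R : Type*) {M : Type*} [Semiring R] [CharP R 2]
    [AddCommMonoid M] [Module R M] (x : M) : x + x = 0 := by
  rw [← two_smul R x, CharTwo.two_eq_zero, zero_smul]

@[simp]
theorem collapse_tmul (a a' : A) (x : X) (b b' : B) :
    collapse k A B X (a ⊗ₜ[k] ((a' ⊗ₜ[k] (x ⊗ₜ[k] b')) ⊗ₜ[k] b)) =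
      (a * a') ⊗ₜ[k] (x ⊗ₜ[k] (b' * b)) := by
  simp [collapse, actA, actB]

@[simp]
theorem boxMap_tmul (i : X →ₗ[k] Y) (a : A) (x : X) (b : B) :
    boxMap k A B i (a ⊗ₜ[k] (x ⊗ₜ[k] b)) = a ⊗ₜ[k] (i x ⊗ₜ[k] b) := by
  simp [boxMap]

@[simp]
theorem ddExt_tmul (g : Y →ₗ[k] Box k A B Z) (a : A) (y : Y) (b : B) :
    ddExt k A B g (a ⊗ₜ[k] (y ⊗ₜ[k] b)) = collapse k A B Z (a ⊗ₜ[k] (g y ⊗ₜ[k] b)) := by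
  simp [ddExt]

theorem ddExt_add (g g' : Y →ₗ[k] Box k A B Z) :
    ddExt k A B (g + g') = ddExt k A B g + ddExt k A B g' := by
  unfold ddExt
  rw [TensorProduct.map_add_left, TensorProduct.map_add_right, LinearMap.comp_add]

theorem ddExt_zero : ddExt k A B (0 : Y →ₗ[k] Box k A B Z) = 0 := by
  ext
  simp

theorem collapse_boxMap_tmul (i : Z →ₗ[k] W) (a : A) (m : Box k A B Z) (b : B) :
    collapse k A B W (a ⊗ₜ[k] (boxMap k A B i m ⊗ₜ[k] b)) =
      boxMap k A B i (collapse k A B Z (a ⊗ₜ[k] (m ⊗ₜ[k] b))) := by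
  induction m using TensorProduct.induction_on with
  | zero => simp
  | tmul a' t =>
    induction t using TensorProduct.induction_on with
    | zero => simp
    | tmul x b' => simp
    | add t₁ t₂ h₁ h₂ => simp_all [tmul_add, add_tmul]
  | add m₁ m₂ h₁ h₂ => simp_all [tmul_add, add_tmul]

theorem ddExt_boxMap_comp (i : Z →ₗ[k] W) (g : Y →ₗ[k] Box k A B Z) :
    ddExt k A B ((boxMap k A B i).comp g) = (boxMap k A B i).comp (ddExt k A B g) := by
  ext
  simp [collapse_boxMap_tmul]

theorem ddExt_comp_boxMap_comp (g : Y →ₗ[k] Box k A B Z) (i : X →ₗ[k] Y)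
    (h : W →ₗ[k] Box k A B X) :
    (ddExt k A B g).comp ((boxMap k A B i).comp h) = (ddExt k A B (g.comp i)).comp h := by
  rw [← LinearMap.comp_assoc]
  congr 1
  ext
  simp

theorem boxD_comp_boxMap_comp (dA : A →ₗ[k] A) (dB : B →ₗ[k] B) (i : X →ₗ[k] Y)
    (h : W →ₗ[k] Box k A B X) :
    (boxD k A B dA dB Y).comp ((boxMap k A B i).comp h) =
      (boxMap k A B i).comp ((boxD k A B dA dB X).comp h) := by
  simp only [← LinearMap.comp_assoc]
  congr 1
  ext
  simp [boxD]

variable (dA : A →ₗ[k] A) (dB : B →ₗ[k] B)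
  (δX : X →ₗ[k] Box k A B X) (δY : Y →ₗ[k] Box k A B Y) (δZ : Z →ₗ[k] Box k A B Z)

theorem ddBdry_Gmor (f : X →ₗ[k] Box k A B Y) (f' : Y →ₗ[k] Box k A B Z)
    (φ : X →ₗ[k] Box k A B Z) :
    ddBdry k A B dA dB δX (coneδ k A B δY δZ f') (Gmor k A B f φ) =
      (boxMap k A B (LinearMap.inl k Y Z)).comp (ddBdry k A B dA dB δX δY f) +
        (boxMap k A B (LinearMap.inr k Y Z)).comp
          (ddComp k A B f' f + ddBdry k A B dA dB δX δZ φ) := by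
  simp only [ddBdry, ddComp, Gmor, coneδ, LinearMap.add_comp, LinearMap.comp_add,
    LinearMap.comp_assoc, ddExt_add, ddExt_boxMap_comp, ddExt_comp_boxMap_comp,
    boxD_comp_boxMap_comp, LinearMap.fst_comp_inl, LinearMap.snd_comp_inl,
    LinearMap.fst_comp_inr, LinearMap.snd_comp_inr, LinearMap.comp_id, LinearMap.comp_zero,
    LinearMap.zero_comp, ddExt_zero, add_zero, zero_add]
  abel

theorem ddBdry_G'mor (f' : Y →ₗ[k] Box k A B Z) (φ' : Y →ₗ[k] Box k A B X)
    (f'' : Z →ₗ[k] Box k A B X) :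
    ddBdry k A B dA dB (coneδ k A B δY δZ f') δX (G'mor k A B φ' f'') =
      (ddComp k A B f'' f' + ddBdry k A B dA dB δY δX φ').comp (LinearMap.fst k Y Z) +
        (ddBdry k A B dA dB δZ δX f'').comp (LinearMap.snd k Y Z) := by
  simp only [ddBdry, ddComp, G'mor, coneδ, LinearMap.add_comp, LinearMap.comp_add,
    LinearMap.comp_assoc, ddExt_add, ddExt_comp_boxMap_comp, LinearMap.fst_comp_inl,
    LinearMap.snd_comp_inl, LinearMap.fst_comp_inr, LinearMap.snd_comp_inr, LinearMap.comp_id, LinearMap.comp_zero,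
    LinearMap.zero_comp, ddExt_zero, add_zero, zero_add]
  abel

theorem ddComp_G'mor_Gmor (f : X →ₗ[k] Box k A B Y) (φ : X →ₗ[k] Box k A B Z)
    (φ' : Y →ₗ[k] Box k A B X) (f'' : Z →ₗ[k] Box k A B X) :
    ddComp k A B (G'mor k A B φ' f'') (Gmor k A B f φ) =
      ddComp k A B f'' φ + ddComp k A B φ' f := by
  simp only [ddComp, G'mor, Gmor, LinearMap.comp_add, ddExt_add, LinearMap.add_comp,
    ddExt_comp_boxMap_comp, LinearMap.comp_assoc, LinearMap.fst_comp_inl,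
    LinearMap.snd_comp_inl, LinearMap.fst_comp_inr, LinearMap.snd_comp_inr, LinearMap.comp_id,
    LinearMap.comp_zero, ddExt_zero, LinearMap.zero_comp, add_zero, zero_add]
  abel

theorem ddBdry_Gmor_eq_zero {f : X →ₗ[k] Box k A B Y} {f' : Y →ₗ[k] Box k A B Z}
    {φ : X →ₗ[k] Box k A B Z} (hf : ddBdry k A B dA dB δX δY f = 0)
    (hφ : ddComp k A B f' f + ddBdry k A B dA dB δX δZ φ = 0) :
    ddBdry k A B dA dB δX (coneδ k A B δY δZ f') (Gmor k A B f φ) = 0 := by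
  rw [ddBdry_Gmor, hf, hφ, LinearMap.comp_zero, LinearMap.comp_zero, add_zero]

theorem ddBdry_G'mor_eq_zero {f' : Y →ₗ[k] Box k A B Z} {φ' : Y →ₗ[k] Box k A B X}
    {f'' : Z →ₗ[k] Box k A B X}
    (hφ' : ddComp k A B f'' f' + ddBdry k A B dA dB δY δX φ' = 0)
    (hf'' : ddBdry k A B dA dB δZ δX f'' = 0) :
    ddBdry k A B dA dB (coneδ k A B δY δZ f') δX (G'mor k A B φ' f'') = 0 := by
  rw [ddBdry_G'mor, hφ', hf'', LinearMap.zero_comp, LinearMap.zero_comp, add_zero]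

theorem ddBdry_eq_ddComp_G'mor_Gmor_add_ddId [CharP k 2] {f : X →ₗ[k] Box k A B Y}
    {φ : X →ₗ[k] Box k A B Z} {φ' : Y →ₗ[k] Box k A B X} {f'' : Z →ₗ[k] Box k A B X}
    {ψ : X →ₗ[k] Box k A B X}
    (hψ : ddComp k A B f'' φ + ddComp k A B φ' f + ddBdry k A B dA dB δX δX ψ =
      ddId k A B X) :
    ddBdry k A B dA dB δX δX ψ =
      ddComp k A B (G'mor k A B φ' f'') (Gmor k A B f φ) + ddId k A B X := by
  rw [ddComp_G'mor_Gmor, ← hψ, ← add_assoc, add_self_eq_zero_of_charTwo k, zero_add]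

end Cone

theorem cone_comparison_maps_are_homomorphisms_and_homotopy_general
    {k : Type*} [CommRing k] [CharP k 2]
    {A B : Type*} [Ring A] [Ring B] [Algebra k A] [Algebra k B]
    (dA : A →ₗ[k] A) (dB : B →ₗ[k] B)
    {M₀ M₁ M₂ : Type*} [AddCommGroup M₀] [Module k M₀]
    [AddCommGroup M₁] [Module k M₁] [AddCommGroup M₂] [Module k M₂]
    (δ₀ : M₀ →ₗ[k] Box k A B M₀) (δ₁ : M₁ →ₗ[k] Box k A B M₁)
    (δ₂ : M₂ →ₗ[k] Box k A B M₂)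
    (f₀ : M₀ →ₗ[k] Box k A B M₁) (f₁ : M₁ →ₗ[k] Box k A B M₂)
    (f₂ : M₂ →ₗ[k] Box k A B M₀)
    (φ₀ : M₀ →ₗ[k] Box k A B M₂) (φ₁ : M₁ →ₗ[k] Box k A B M₀)
    (φ₂ : M₂ →ₗ[k] Box k A B M₁)
    (ψ₀ : M₀ →ₗ[k] Box k A B M₀) (ψ₁ : M₁ →ₗ[k] Box k A B M₁)
    (ψ₂ : M₂ →ₗ[k] Box k A B M₂)
    (hf₀ : ddBdry k A B dA dB δ₀ δ₁ f₀ = 0)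
    (hf₁ : ddBdry k A B dA dB δ₁ δ₂ f₁ = 0)
    (hf₂ : ddBdry k A B dA dB δ₂ δ₀ f₂ = 0)
    (hφ₀ : ddComp k A B f₁ f₀ + ddBdry k A B dA dB δ₀ δ₂ φ₀ = 0)
    (hφ₁ : ddComp k A B f₂ f₁ + ddBdry k A B dA dB δ₁ δ₀ φ₁ = 0)
    (hφ₂ : ddComp k A B f₀ f₂ + ddBdry k A B dA dB δ₂ δ₁ φ₂ = 0)
    (hψ₀ : ddComp k A B f₂ φ₀ + ddComp k A B φ₁ f₀ +
      ddBdry k A B dA dB δ₀ δ₀ ψ₀ = ddId k A B M₀)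
    (hψ₁ : ddComp k A B f₀ φ₁ + ddComp k A B φ₂ f₁ +
      ddBdry k A B dA dB δ₁ δ₁ ψ₁ = ddId k A B M₁)
    (hψ₂ : ddComp k A B f₁ φ₂ + ddComp k A B φ₀ f₂ +
      ddBdry k A B dA dB δ₂ δ₂ ψ₂ = ddId k A B M₂) :
    (ddBdry k A B dA dB δ₀ (coneδ k A B δ₁ δ₂ f₁) (Gmor k A B f₀ φ₀) = 0 ∧
      ddBdry k A B dA dB (coneδ k A B δ₁ δ₂ f₁) δ₀ (G'mor k A B φ₁ f₂) = 0 ∧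
      ddBdry k A B dA dB δ₀ δ₀ ψ₀ =
        ddComp k A B (G'mor k A B φ₁ f₂) (Gmor k A B f₀ φ₀) + ddId k A B M₀) ∧
    (ddBdry k A B dA dB δ₁ (coneδ k A B δ₂ δ₀ f₂) (Gmor k A B f₁ φ₁) = 0 ∧
      ddBdry k A B dA dB (coneδ k A B δ₂ δ₀ f₂) δ₁ (G'mor k A B φ₂ f₀) = 0 ∧
      ddBdry k A B dA dB δ₁ δ₁ ψ₁ =
        ddComp k A B (G'mor k A B φ₂ f₀) (Gmor k A B f₁ φ₁) + ddId k A B M₁) ∧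
    (ddBdry k A B dA dB δ₂ (coneδ k A B δ₀ δ₁ f₀) (Gmor k A B f₂ φ₂) = 0 ∧
      ddBdry k A B dA dB (coneδ k A B δ₀ δ₁ f₀) δ₂ (G'mor k A B φ₀ f₁) = 0 ∧
      ddBdry k A B dA dB δ₂ δ₂ ψ₂ =
        ddComp k A B (G'mor k A B φ₀ f₁) (Gmor k A B f₂ φ₂) + ddId k A B M₂) := by
  refine ⟨⟨?_, ?_, ?_⟩, ⟨?_, ?_, ?_⟩, ⟨?_, ?_, ?_⟩⟩
  · exact ddBdry_Gmor_eq_zero k A B dA dB δ₀ δ₁ δ₂ hf₀ hφ₀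
  · exact ddBdry_G'mor_eq_zero k A B dA dB δ₀ δ₁ δ₂ hφ₁ hf₂
  · exact ddBdry_eq_ddComp_G'mor_Gmor_add_ddId k A B dA dB δ₀ hψ₀
  · exact ddBdry_Gmor_eq_zero k A B dA dB δ₁ δ₂ δ₀ hf₁ hφ₁
  · exact ddBdry_G'mor_eq_zero k A B dA dB δ₁ δ₂ δ₀ hφ₂ hf₀
  · exact ddBdry_eq_ddComp_G'mor_Gmor_add_ddId k A B dA dB δ₁ hψ₁
  · exact ddBdry_Gmor_eq_zero k A B dA dB δ₂ δ₀ δ₁ hf₂ hφ₂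
  · exact ddBdry_G'mor_eq_zero k A B dA dB δ₂ δ₀ δ₁ hφ₀ hf₁
  · exact ddBdry_eq_ddComp_G'mor_Gmor_add_ddId k A B dA dB δ₂ hψ₂

/-- **Lemma 2.1 for type DD structures: the comparison maps with the cone.**
Let `A, B` be unital DGAs over rings of characteristic `2`, and let
`ℳ₀, ℳ₁, ℳ₂` be type DD structures over `(A, B)`, cyclically indexed by
`ℤ/3` (identifying `∞` with `2`), with morphisms `f_k : ℳ_k → ℳ_{k+1}`,
`φ_k : ℳ_k → ℳ_{k+2}`, `ψ_k : ℳ_k → ℳ_k` satisfying `∂f_k = 0`,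
`f_{k+1} ∘ f_k + ∂φ_k = 0` and
`f_{k+2} ∘ φ_k + φ_{k+1} ∘ f_k + ∂ψ_k = Id_k`.  Then for each `k` the maps
`G_k(m) = (f_k m, φ_k m)` and `G'_k(m_{k+1}, m_{k+2}) = φ_{k+1} m_{k+1} +
f_{k+2} m_{k+2}` are type DD homomorphisms between `ℳ_k` and
`Cone(f_{k+1})`, and `G'_k ∘ G_k` is homotopic to `Id_k` via the homotopy
`ψ_k`, i.e. `∂ψ_k = G'_k ∘ G_k + Id_k`. -/
theorem cone_comparison_maps_are_homomorphisms_and_homotopy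
    {k : Type*} [CommRing k] [CharP k 2]
    {A B : Type*} [Ring A] [Ring B] [Algebra k A] [Algebra k B]
    (dA : A →ₗ[k] A) (dB : B →ₗ[k] B)
    (hdA2 : dA ∘ₗ dA = 0) (hdA1 : dA 1 = 0)
    (hdAmul : ∀ a a' : A, dA (a * a') = dA a * a' + a * dA a')
    (hdB2 : dB ∘ₗ dB = 0) (hdB1 : dB 1 = 0)
    (hdBmul : ∀ b b' : B, dB (b * b') = dB b * b' + b * dB b')
    {M₀ M₁ M₂ : Type*} [AddCommGroup M₀] [Module k M₀]
    [AddCommGroup M₁] [Module k M₁] [AddCommGroup M₂] [Module k M₂]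
    (δ₀ : M₀ →ₗ[k] Box k A B M₀) (δ₁ : M₁ →ₗ[k] Box k A B M₁)
    (δ₂ : M₂ →ₗ[k] Box k A B M₂)
    (h₀ : IsDDStructure k A B dA dB δ₀) (h₁ : IsDDStructure k A B dA dB δ₁)
    (h₂ : IsDDStructure k A B dA dB δ₂)
    (f₀ : M₀ →ₗ[k] Box k A B M₁) (f₁ : M₁ →ₗ[k] Box k A B M₂)
    (f₂ : M₂ →ₗ[k] Box k A B M₀)
    (φ₀ : M₀ →ₗ[k] Box k A B M₂) (φ₁ : M₁ →ₗ[k] Box k A B M₀)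
    (φ₂ : M₂ →ₗ[k] Box k A B M₁)
    (ψ₀ : M₀ →ₗ[k] Box k A B M₀) (ψ₁ : M₁ →ₗ[k] Box k A B M₁)
    (ψ₂ : M₂ →ₗ[k] Box k A B M₂)
    (hf₀ : ddBdry k A B dA dB δ₀ δ₁ f₀ = 0)
    (hf₁ : ddBdry k A B dA dB δ₁ δ₂ f₁ = 0)
    (hf₂ : ddBdry k A B dA dB δ₂ δ₀ f₂ = 0)
    (hφ₀ : ddComp k A B f₁ f₀ + ddBdry k A B dA dB δ₀ δ₂ φ₀ = 0)
    (hφ₁ : ddComp k A B f₂ f₁ + ddBdry k A B dA dB δ₁ δ₀ φ₁ = 0)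
    (hφ₂ : ddComp k A B f₀ f₂ + ddBdry k A B dA dB δ₂ δ₁ φ₂ = 0)
    (hψ₀ : ddComp k A B f₂ φ₀ + ddComp k A B φ₁ f₀ +
      ddBdry k A B dA dB δ₀ δ₀ ψ₀ = ddId k A B M₀)
    (hψ₁ : ddComp k A B f₀ φ₁ + ddComp k A B φ₂ f₁ +
      ddBdry k A B dA dB δ₁ δ₁ ψ₁ = ddId k A B M₁)
    (hψ₂ : ddComp k A B f₁ φ₂ + ddComp k A B φ₀ f₂ +
      ddBdry k A B dA dB δ₂ δ₂ ψ₂ = ddId k A B M₂) :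
    (ddBdry k A B dA dB δ₀ (coneδ k A B δ₁ δ₂ f₁) (Gmor k A B f₀ φ₀) = 0 ∧
      ddBdry k A B dA dB (coneδ k A B δ₁ δ₂ f₁) δ₀ (G'mor k A B φ₁ f₂) = 0 ∧
      ddBdry k A B dA dB δ₀ δ₀ ψ₀ =
        ddComp k A B (G'mor k A B φ₁ f₂) (Gmor k A B f₀ φ₀) + ddId k A B M₀) ∧
    (ddBdry k A B dA dB δ₁ (coneδ k A B δ₂ δ₀ f₂) (Gmor k A B f₁ φ₁) = 0 ∧
      ddBdry k A B dA dB (coneδ k A B δ₂ δ₀ f₂) δ₁ (G'mor k A B φ₂ f₀) = 0 ∧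
      ddBdry k A B dA dB δ₁ δ₁ ψ₁ =
        ddComp k A B (G'mor k A B φ₂ f₀) (Gmor k A B f₁ φ₁) + ddId k A B M₁) ∧
    (ddBdry k A B dA dB δ₂ (coneδ k A B δ₀ δ₁ f₀) (Gmor k A B f₂ φ₂) = 0 ∧
      ddBdry k A B dA dB (coneδ k A B δ₀ δ₁ f₀) δ₂ (G'mor k A B φ₀ f₁) = 0 ∧
      ddBdry k A B dA dB δ₂ δ₂ ψ₂ =
        ddComp k A B (G'mor k A B φ₀ f₁) (Gmor k A B f₂ φ₂) + ddId k A B M₂) :=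
  cone_comparison_maps_are_homomorphisms_and_homotopy_general dA dB δ₀ δ₁ δ₂ f₀ f₁ f₂ φ₀ φ₁ φ₂ ψ₀ ψ₁
    ψ₂ hf₀ hf₁ hf₂ hφ₀ hφ₁ hφ₂ hψ₀ hψ₁ hψ₂

end DD
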